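/- arXiv:2206.05441 — 4 statements merged into one kernel-verified Lean document; each statement's English description precedes it below -/
import Mathlib

section
/- For an indefinite binary quadratic form f(x,y) = ax² + bxy + cy² with discriminant δ(f) = b² − 4ac > 0, and any matrix M ∈ SL₂(ℝ) with columns (x,y), (u₁,u₂) := M·(r₁,r₂), (v₁,v₂) := M·(s₁,s₂), if f(X,Y) = (u₂X − u₁Y)(v₂X − v₁Y), then √δ(f)/|f(x,y)| = |r₁/r₂ − s₁/s₂| (assuming all denominators are nonzero). -/
theorem quadratic_form_height
    (a b c r₁ r₂ s₁ s₂ : ℝ)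
    (M : Matrix (Fin 2) (Fin 2) ℝ) (hM : M.det = 1)
    (hδ : 0 < b ^ 2 - 4 * a * c)
    (x y u₁ u₂ v₁ v₂ : ℝ)
    (hxy : ![x, y] = M.mulVec ![1, 0])
    (hu : ![u₁, u₂] = M.mulVec ![r₁, r₂])
    (hv : ![v₁, v₂] = M.mulVec ![s₁, s₂])
    (hf : ∀ X Y : ℝ,
      a * X ^ 2 + b * X * Y + c * Y ^ 2 = (u₂ * X - u₁ * Y) * (v₂ * X - v₁ * Y))
    (hr₂ : r₂ ≠ 0) (hs₂ : s₂ ≠ 0)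
    (hfxy : a * x ^ 2 + b * x * y + c * y ^ 2 ≠ 0) :
    Real.sqrt (b ^ 2 - 4 * a * c) / |a * x ^ 2 + b * x * y + c * y ^ 2| =
      |r₁ / r₂ - s₁ / s₂| := by
  have hdet := hM
  rw [Matrix.det_fin_two] at hdet
  have hx0 := congrFun hxy 0
  have hx1 := congrFun hxy 1
  have hu0 := congrFun hu 0
  have hu1 := congrFun hu 1
  have hv0 := congrFun hv 0
  have hv1 := congrFun hv 1
  simp [Matrix.mulVec, dotProduct, Fin.sum_univ_two] at hx0 hx1 hu0 hu1 hv0 hv1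
  have ha : a = u₂ * v₂ := by have := hf 1 0; nlinarith [this]
  have hc : c = u₁ * v₁ := by have := hf 0 1; nlinarith [this]
  have hb : b = -(u₂ * v₁ + u₁ * v₂) := by have := hf 1 1; nlinarith [this]
  have hcross : u₁ * v₂ - u₂ * v₁ = r₁ * s₂ - r₂ * s₁ := by
    subst hu0 hu1 hv0 hv1; linear_combination (r₁ * s₂ - r₂ * s₁) * hdet
  have hval : a * x ^ 2 + b * x * y + c * y ^ 2 = r₂ * s₂ := by
    rw [hf x y]
    subst hx0 hx1 hu0 hu1 hv0 hv1
    linear_combination r₂ * s₂ * (M 0 0 * M 1 1 - M 0 1 * M 1 0 + 1) * hdet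
  have hδeq : b ^ 2 - 4 * a * c = (r₁ * s₂ - r₂ * s₁) ^ 2 := by
    rw [ha, hb, hc, ← hcross]; ring
  rw [hδeq, Real.sqrt_sq_eq_abs, hval]
  rw [div_sub_div _ _ hr₂ hs₂, abs_div, ← abs_div]
end

section
/- The fixed point in [√2, ∞) of the map t ↦ N₃N₃N₂N₁N₁N₂ · t, where the matrices act as fractional linear transformations with N₁ = [[1,0],[√2,1]], N₂ = [[1,√2],[√2,1]], N₃ = [[1,√2],[0,1]], equals √7 + √2. -/
/-- The action of a matrix on `ℝ` as a fractional linear transformation. -/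
noncomputable def mob (M : Matrix (Fin 2) (Fin 2) ℝ) (t : ℝ) : ℝ :=
  (M 0 0 * t + M 0 1) / (M 1 0 * t + M 1 1)

noncomputable def N₁ : Matrix (Fin 2) (Fin 2) ℝ := !![1, 0; Real.sqrt 2, 1]
noncomputable def N₂ : Matrix (Fin 2) (Fin 2) ℝ := !![1, Real.sqrt 2; Real.sqrt 2, 1]
noncomputable def N₃ : Matrix (Fin 2) (Fin 2) ℝ := !![1, Real.sqrt 2; 0, 1]

lemma prod_eq : N₃ * N₃ * N₂ * N₁ * N₁ * N₂ =
    !![23, 20 * Real.sqrt 2; 4 * Real.sqrt 2, 7] := by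
  have h2 : Real.sqrt 2 * Real.sqrt 2 = 2 := Real.mul_self_sqrt (by norm_num)
  have h2' : Real.sqrt 2 ^ 2 = 2 := Real.sq_sqrt (by norm_num)
  have h3' : Real.sqrt 2 ^ 3 = 2 * Real.sqrt 2 := by
    rw [pow_succ, h2']
  ext i j
  fin_cases i <;> fin_cases j <;>
    simp [N₁, N₂, N₃, Matrix.mul_apply, Fin.sum_univ_two] <;> ring_nf <;>
      nlinarith [h2', h3']

theorem fixed_point_332112 :
    (Real.sqrt 7 + Real.sqrt 2 ∈ Set.Ici (Real.sqrt 2) ∧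
      mob (N₃ * N₃ * N₂ * N₁ * N₁ * N₂) (Real.sqrt 7 + Real.sqrt 2) =
        Real.sqrt 7 + Real.sqrt 2) ∧
    ∀ t ∈ Set.Ici (Real.sqrt 2),
      mob (N₃ * N₃ * N₂ * N₁ * N₁ * N₂) t = t → t = Real.sqrt 7 + Real.sqrt 2 := by
  have h2 : Real.sqrt 2 * Real.sqrt 2 = 2 := Real.mul_self_sqrt (by norm_num)
  have h7 : Real.sqrt 7 * Real.sqrt 7 = 7 := Real.mul_self_sqrt (by norm_num)
  have h2pos : (0:ℝ) < Real.sqrt 2 := Real.sqrt_pos.mpr (by norm_num)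
  have h7pos : (0:ℝ) < Real.sqrt 7 := Real.sqrt_pos.mpr (by norm_num)
  rw [prod_eq]
  constructor
  · constructor
    · simp only [Set.mem_Ici]; linarith
    · have hden : 4 * Real.sqrt 2 * (Real.sqrt 7 + Real.sqrt 2) + 7 ≠ 0 := by
        positivity
      simp only [mob, Matrix.of_apply, Matrix.cons_val', Matrix.cons_val_zero, Matrix.cons_val_one,
        Matrix.head_cons, Matrix.empty_val', Matrix.cons_val_fin_one, Matrix.head_fin_const]
      rw [div_eq_iff hden]
      ring_nf
      nlinarith [h2, h7]
  · intro t ht heq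
    simp only [Set.mem_Ici] at ht
    have htpos : 0 < t := lt_of_lt_of_le h2pos ht
    have hden : 4 * Real.sqrt 2 * t + 7 ≠ 0 := by positivity
    simp only [mob, Matrix.of_apply, Matrix.cons_val', Matrix.cons_val_zero, Matrix.cons_val_one,
      Matrix.head_cons, Matrix.empty_val', Matrix.cons_val_fin_one, Matrix.head_fin_const] at heq
    rw [div_eq_iff hden] at heq
    -- equation: 23t + 20√2 = t(4√2 t + 7) → (t - √2)² = 7
    have key : (t - Real.sqrt 2) ^ 2 = 7 := by nlinarith [h2]
    have hnn : 0 ≤ t - Real.sqrt 2 := sub_nonneg.mpr ht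
    have : t - Real.sqrt 2 = Real.sqrt 7 := by nlinarith [h7, h7pos]
    linarith
end

section
/- Let B be a union of finitely many disjoint closed intervals A₁, …, A_r in ℝ, let I be an open interval contained in A₁, and let A_{r+1}, A_{r+2} be the disjoint closed intervals with A₁ \ I = A_{r+1} ∪ A_{r+2}. Set B* = A₂ ∪ ⋯ ∪ A_r ∪ A_{r+1} ∪ A_{r+2}. If |Aᵢ| ≥ |I| for all i = 2, …, r+2, then B + B = B* + B*, where + denotes the Minkowski sum. -/
open Pointwise

lemma addIcc_sub (u0 p q v0 c d : ℝ) (h1 : u0 ≤ p) (h2 : p < q) (h3 : q ≤ v0)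
    (hcd : q - p ≤ d - c) :
    Set.Icc u0 v0 + Set.Icc c d ⊆ (Set.Icc u0 p ∪ Set.Icc q v0) + Set.Icc c d := by
  rintro s ⟨x, hx, y, hy, rfl⟩
  obtain ⟨hx1, hx2⟩ := hx
  obtain ⟨hy1, hy2⟩ := hy
  rcases le_or_gt x p with h | h
  · exact ⟨x, Or.inl ⟨hx1, h⟩, y, ⟨hy1, hy2⟩, rfl⟩
  rcases le_or_gt q x with h' | h'
  · exact ⟨x, Or.inr ⟨h', hx2⟩, y, ⟨hy1, hy2⟩, rfl⟩
  rcases le_or_gt (y + (x - p)) d with h'' | h''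
  · exact ⟨p, Or.inl ⟨h1, le_refl p⟩, y + (x - p), ⟨by linarith, h''⟩, by ring⟩
  · exact ⟨q, Or.inr ⟨le_refl q, h3⟩, x + y - q, ⟨by linarith, by linarith⟩, by ring⟩


lemma split_endpoints (u0 p q v0 u' v' u'' v'' : ℝ) (h1 : u0 ≤ p) (h2 : p < q) (h3 : q ≤ v0)
    (hle' : u' ≤ v') (hle'' : u'' ≤ v'')
    (heq : Set.Icc u' v' ∪ Set.Icc u'' v'' = Set.Icc u0 p ∪ Set.Icc q v0) :
    (u' = u0 ∧ v' = p ∧ u'' = q ∧ v'' = v0) ∨ (u'' = u0 ∧ v'' = p ∧ u' = q ∧ v' = v0) := by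
  simp only [Set.ext_iff, Set.mem_union, Set.mem_Icc] at heq
  set m := (p + q) / 2 with hmdef
  have hm1 : p < m := by simp only [hmdef]; linarith
  have hm2 : m < q := by simp only [hmdef]; linarith
  -- no interval straddles the gap
  have hstr : ∀ a b : ℝ, a ≤ b → (∀ x, a ≤ x ∧ x ≤ b → (u0 ≤ x ∧ x ≤ p) ∨ (q ≤ x ∧ x ≤ v0)) →
      b ≤ p ∨ q ≤ a := by
    intro a b hab hsub
    rcases le_or_gt a m with h | h
    · rcases le_or_gt m b with h' | h'
      · rcases hsub m ⟨h, h'⟩ with ⟨c, d⟩ | ⟨c, d⟩ <;> linarith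
      · rcases hsub b ⟨hab, le_refl b⟩ with ⟨c, d⟩ | ⟨c, d⟩
        · exact Or.inl d
        · linarith
    · rcases hsub a ⟨le_refl a, hab⟩ with ⟨c, d⟩ | ⟨c, d⟩
      · linarith
      · exact Or.inr c
  have hsub' : ∀ x, u' ≤ x ∧ x ≤ v' → (u0 ≤ x ∧ x ≤ p) ∨ (q ≤ x ∧ x ≤ v0) :=
    fun x hx => (heq x).mp (Or.inl hx)
  have hsub'' : ∀ x, u'' ≤ x ∧ x ≤ v'' → (u0 ≤ x ∧ x ≤ p) ∨ (q ≤ x ∧ x ≤ v0) :=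
    fun x hx => (heq x).mp (Or.inr hx)
  have hu0 : (u' ≤ u0 ∧ u0 ≤ v') ∨ (u'' ≤ u0 ∧ u0 ≤ v'') := (heq u0).mpr (Or.inl ⟨le_refl _, h1⟩)
  have hp : (u' ≤ p ∧ p ≤ v') ∨ (u'' ≤ p ∧ p ≤ v'') := (heq p).mpr (Or.inl ⟨h1, le_refl _⟩)
  have hq : (u' ≤ q ∧ q ≤ v') ∨ (u'' ≤ q ∧ q ≤ v'') := (heq q).mpr (Or.inr ⟨le_refl _, h3⟩)
  have hv0 : (u' ≤ v0 ∧ v0 ≤ v') ∨ (u'' ≤ v0 ∧ v0 ≤ v'') := (heq v0).mpr (Or.inr ⟨h3, le_refl _⟩)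
  rcases hstr u' v' hle' hsub' with hc' | hc' <;>
    rcases hstr u'' v'' hle'' hsub'' with hc'' | hc''
  · -- both left of p : q not covered
    exfalso; rcases hq with ⟨a, b⟩ | ⟨a, b⟩ <;> linarith
  · -- ' is [u0,p], '' is [q,v0]
    left
    have e1 : u' = u0 := by
      rcases hsub' u' ⟨le_refl _, hle'⟩ with ⟨a, b⟩ | ⟨a, b⟩
      · rcases hu0 with ⟨c, d⟩ | ⟨c, d⟩ <;> [linarith; linarith]
      · linarith
    have e2 : v' = p := by
      rcases hp with ⟨a, b⟩ | ⟨a, b⟩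
      · linarith
      · linarith
    have e3 : u'' = q := by
      rcases hsub'' u'' ⟨le_refl _, hle''⟩ with ⟨a, b⟩ | ⟨a, b⟩
      · linarith
      · rcases hq with ⟨c, d⟩ | ⟨c, d⟩ <;> linarith
    have e4 : v'' = v0 := by
      rcases hsub'' v'' ⟨hle'', le_refl _⟩ with ⟨a, b⟩ | ⟨a, b⟩
      · linarith
      · rcases hv0 with ⟨c, d⟩ | ⟨c, d⟩ <;> linarith
    exact ⟨e1, e2, e3, e4⟩
  · -- '' is [u0,p], ' is [q,v0]
    right
    have e1 : u'' = u0 := by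
      rcases hsub'' u'' ⟨le_refl _, hle''⟩ with ⟨a, b⟩ | ⟨a, b⟩
      · rcases hu0 with ⟨c, d⟩ | ⟨c, d⟩ <;> linarith
      · linarith
    have e2 : v'' = p := by
      rcases hp with ⟨a, b⟩ | ⟨a, b⟩
      · linarith
      · linarith
    have e3 : u' = q := by
      rcases hsub' u' ⟨le_refl _, hle'⟩ with ⟨a, b⟩ | ⟨a, b⟩
      · linarith
      · rcases hq with ⟨c, d⟩ | ⟨c, d⟩ <;> linarith
    have e4 : v' = v0 := by
      rcases hsub' v' ⟨hle', le_refl _⟩ with ⟨a, b⟩ | ⟨a, b⟩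
      · linarith
      · rcases hv0 with ⟨c, d⟩ | ⟨c, d⟩ <;> linarith
    exact ⟨e1, e2, e3, e4⟩
  · -- both right of q : u0 not covered
    exfalso; rcases hu0 with ⟨a, b⟩ | ⟨a, b⟩ <;> linarith




lemma core_sum (r : ℕ) (u v : Fin r → ℝ) (i0 : Fin r) (p q : ℝ) (h2 : p < q)
    (h1 : u i0 ≤ p) (h3 : q ≤ v i0)
    (hpu : q - p ≤ p - u i0) (hqv : q - p ≤ v i0 - q)
    (hlen : ∀ i, i ≠ i0 → q - p ≤ v i - u i) :
    (⋃ i, Set.Icc (u i) (v i)) + (⋃ i, Set.Icc (u i) (v i)) =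
      ((⋃ i ∈ {j : Fin r | j ≠ i0}, Set.Icc (u i) (v i)) ∪
        (Set.Icc (u i0) p ∪ Set.Icc q (v i0))) +
      ((⋃ i ∈ {j : Fin r | j ≠ i0}, Set.Icc (u i) (v i)) ∪
        (Set.Icc (u i0) p ∪ Set.Icc q (v i0))) := by
  set T := ⋃ i ∈ {j : Fin r | j ≠ i0}, Set.Icc (u i) (v i) with hT
  set S := Set.Icc (u i0) p ∪ Set.Icc q (v i0) with hSdef
  set A := Set.Icc (u i0) (v i0) with hA
  have hSA : S ⊆ A := by
    apply Set.union_subset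
    · exact Set.Icc_subset_Icc le_rfl (by linarith)
    · exact Set.Icc_subset_Icc (by linarith) le_rfl
  have hTB : T ⊆ ⋃ i, Set.Icc (u i) (v i) := by
    apply Set.iUnion₂_subset
    intro i _
    exact Set.subset_iUnion (fun i => Set.Icc (u i) (v i)) i
  have hB : (⋃ i, Set.Icc (u i) (v i)) = T ∪ A := by
    apply Set.Subset.antisymm
    · apply Set.iUnion_subset
      intro i
      by_cases h : i = i0
      · subst h; exact Set.subset_union_right
      · exact Set.subset_union_of_subset_left
          (Set.subset_biUnion_of_mem (u := fun i => Set.Icc (u i) (v i)) h) _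
    · exact Set.union_subset hTB (Set.subset_iUnion (fun i => Set.Icc (u i) (v i)) i0)
  -- key : A + J ⊆ S + J for long J, S ⊆ A
  have hAT : A + T ⊆ (T ∪ S) + (T ∪ S) := by
    rintro s ⟨x, hx, y, hy, rfl⟩
    simp only [hT, Set.mem_iUnion, Set.mem_setOf_eq] at hy
    obtain ⟨i, hi, hyi⟩ := hy
    have := addIcc_sub (u i0) p q (v i0) (u i) (v i) h1 h2 h3 (hlen i hi) ⟨x, hx, y, hyi, rfl⟩
    obtain ⟨a, ha, b, hb, hab⟩ := this
    exact ⟨a, Or.inr ha, b, Set.mem_of_mem_of_subset hb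
      (Set.subset_union_of_subset_left
        (Set.subset_biUnion_of_mem (u := fun i => Set.Icc (u i) (v i)) hi) _), hab⟩
  have hAA : A + A ⊆ (T ∪ S) + (T ∪ S) := by
    have s1 : A + A ⊆ S + A :=
      addIcc_sub (u i0) p q (v i0) (u i0) (v i0) h1 h2 h3 (by linarith)
    have s3 : A + S ⊆ S + S := by
      rw [hSdef, Set.add_union]
      apply Set.union_subset
      · exact (addIcc_sub (u i0) p q (v i0) (u i0) p h1 h2 h3 hpu).trans
          (Set.add_subset_add (Set.Subset.refl _) Set.subset_union_left)
      · exact (addIcc_sub (u i0) p q (v i0) q (v i0) h1 h2 h3 hqv).trans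
          (Set.add_subset_add (Set.Subset.refl _) Set.subset_union_right)
    calc A + A ⊆ S + A := s1
      _ = A + S := add_comm _ _
      _ ⊆ S + S := s3
      _ ⊆ (T ∪ S) + (T ∪ S) := Set.add_subset_add Set.subset_union_right Set.subset_union_right
  apply Set.Subset.antisymm
  · rw [hB, Set.union_add, Set.add_union, Set.add_union]
    apply Set.union_subset <;> apply Set.union_subset
    · exact Set.add_subset_add Set.subset_union_left Set.subset_union_left
    · rw [add_comm T A]; exact hAT
    · exact hAT
    · exact hAA
  · apply Set.add_subset_add <;>
      exact Set.union_subset (hB ▸ Set.subset_union_left)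
        (hSA.trans (hB ▸ Set.subset_union_right))


open Pointwise in
theorem minkowski_sum_dissection (r : ℕ) (hr : 0 < r) (u v : Fin r → ℝ)
    (hle : ∀ i, u i ≤ v i)
    (hdisj : Pairwise (Function.onFun Disjoint fun i => Set.Icc (u i) (v i)))
    (p q : ℝ) (hpq : p < q)
    (hI : Set.Ioo p q ⊆ Set.Icc (u ⟨0, hr⟩) (v ⟨0, hr⟩))
    (u' v' u'' v'' : ℝ) (hle' : u' ≤ v') (hle'' : u'' ≤ v'')
    (hsplit : Set.Icc (u ⟨0, hr⟩) (v ⟨0, hr⟩) \ Set.Ioo p q =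
      Set.Icc u' v' ∪ Set.Icc u'' v'')
    (hd : Disjoint (Set.Icc u' v') (Set.Icc u'' v''))
    (hlen : ∀ i : Fin r, i ≠ ⟨0, hr⟩ → q - p ≤ v i - u i)
    (hlen' : q - p ≤ v' - u') (hlen'' : q - p ≤ v'' - u'') :
    (⋃ i, Set.Icc (u i) (v i)) + (⋃ i, Set.Icc (u i) (v i)) =
      ((⋃ i ∈ {j : Fin r | j ≠ ⟨0, hr⟩}, Set.Icc (u i) (v i)) ∪
          Set.Icc u' v' ∪ Set.Icc u'' v'') +
        ((⋃ i ∈ {j : Fin r | j ≠ ⟨0, hr⟩}, Set.Icc (u i) (v i)) ∪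
          Set.Icc u' v' ∪ Set.Icc u'' v'') := by
  set i0 : Fin r := ⟨0, hr⟩ with hi0
  have hcl : Set.Icc p q ⊆ Set.Icc (u i0) (v i0) := by
    rw [← closure_Ioo hpq.ne]
    exact closure_minimal hI isClosed_Icc
  have h1 : u i0 ≤ p := (hcl ⟨le_refl p, hpq.le⟩).1
  have h3 : q ≤ v i0 := (hcl ⟨hpq.le, le_refl q⟩).2
  have hSdiff : Set.Icc (u i0) (v i0) \ Set.Ioo p q =
      Set.Icc (u i0) p ∪ Set.Icc q (v i0) := by
    ext x
    simp only [Set.mem_diff, Set.mem_Icc, Set.mem_Ioo, Set.mem_union, not_and, not_lt]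
    constructor
    · rintro ⟨⟨ha, hb⟩, hg⟩
      rcases le_or_gt x p with h | h
      · exact Or.inl ⟨ha, h⟩
      · exact Or.inr ⟨hg h, hb⟩
    · rintro (⟨ha, hb⟩ | ⟨ha, hb⟩)
      · exact ⟨⟨ha, by linarith⟩, fun h => by linarith⟩
      · exact ⟨⟨by linarith, hb⟩, fun h => ha⟩
  have hU : Set.Icc u' v' ∪ Set.Icc u'' v'' = Set.Icc (u i0) p ∪ Set.Icc q (v i0) :=
    hsplit.symm.trans hSdiff
  have hrw : ((⋃ i ∈ {j : Fin r | j ≠ i0}, Set.Icc (u i) (v i)) ∪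
      Set.Icc u' v' ∪ Set.Icc u'' v'') =
      (⋃ i ∈ {j : Fin r | j ≠ i0}, Set.Icc (u i) (v i)) ∪
        (Set.Icc (u i0) p ∪ Set.Icc q (v i0)) := by
    rw [Set.union_assoc, hU]
  rw [hrw]
  rcases split_endpoints (u i0) p q (v i0) u' v' u'' v'' h1 hpq h3 hle' hle'' hU with
    ⟨e1, e2, e3, e4⟩ | ⟨e1, e2, e3, e4⟩
  · exact core_sum r u v i0 p q hpq h1 h3 (by linarith) (by linarith) hlen
  · exact core_sum r u v i0 p q hpq h1 h3 (by linarith) (by linarith) hlen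
end

section
/- If C₁ ⊇ C₂ ⊇ C₃ ⊇ ⋯ is a decreasing sequence of nonempty compact subsets of ℝ, then (⋂ᵢ Cᵢ) + (⋂ᵢ Cᵢ) = ⋂ᵢ (Cᵢ + Cᵢ), where + denotes the Minkowski sum. -/
open Pointwise in
theorem minkowski_sum_inter (C : ℕ → Set ℝ)
    (hne : ∀ n, (C n).Nonempty) (hcpt : ∀ n, IsCompact (C n))
    (hmono : ∀ n, C (n + 1) ⊆ C n) :
    (⋂ n, C n) + (⋂ n, C n) = ⋂ n, (C n + C n) := by
  apply Set.Subset.antisymm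
  · intro x hx
    rw [Set.mem_add] at hx
    obtain ⟨a, ha, b, hb, rfl⟩ := hx
    simp only [Set.mem_iInter] at ha hb ⊢
    intro n
    exact Set.add_mem_add (ha n) (hb n)
  · intro x hx
    simp only [Set.mem_iInter] at hx
    set K : ℕ → Set (ℝ × ℝ) := fun n => (C n ×ˢ C n) ∩ {p | p.1 + p.2 = x} with hK
    have hKne : ∀ n, (K n).Nonempty := by
      intro n
      obtain ⟨a, ha, b, hb, hab⟩ := Set.mem_add.mp (hx n)
      exact ⟨(a, b), ⟨⟨ha, hb⟩, hab⟩⟩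
    have hKclosed : ∀ n, IsClosed (K n) := by
      intro n
      exact (((hcpt n).isClosed).prod ((hcpt n).isClosed)).inter
        (isClosed_singleton.preimage (continuous_fst.add continuous_snd))
    have hKmono : ∀ n, K (n + 1) ⊆ K n := by
      intro n p hp
      exact ⟨⟨hmono n hp.1.1, hmono n hp.1.2⟩, hp.2⟩
    have hK0 : IsCompact (K 0) := ((hcpt 0).prod (hcpt 0)).inter_right
      (isClosed_singleton.preimage (continuous_fst.add continuous_snd))
    obtain ⟨⟨a, b⟩, hab⟩ := IsCompact.nonempty_iInter_of_sequence_nonempty_isCompact_isClosed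
      K hKmono hKne hK0 hKclosed
    simp only [Set.mem_iInter] at hab
    refine Set.mem_add.mpr ⟨a, ?_, b, ?_, (hab 0).2⟩ <;>
      simp only [Set.mem_iInter] <;> intro n
    · exact (hab n).1.1
    · exact (hab n).1.2
end
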